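/- arXiv:1810.12216 — 2 statements merged into one kernel-verified Lean document; each statement's English description precedes it below -/
import Mathlib

section
/- Let V₃ have basis v₁,v₂,v₃ and V₆ have basis e₁,…,e₆, and set ω₁ = a·e₁∧e₂ + b·e₃∧e₆ + c·e₅∧e₄, ω₂ = a·e₃∧e₄ + b·e₅∧e₂ + c·e₁∧e₆, ω₃ = a·e₅∧e₆ + b·e₁∧e₄ + c·e₃∧e₂ for scalars a,b,c ∈ ℂ. Then the map Sym²⟨ω₁,ω₂,ω₃⟩ → ⋀⁴V₆ (induced by wedge product) is injective if and only if the vectors (a²,b²,c²) and (bc,ac,ab) in ℂ³ are not proportional. -/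
open ExteriorAlgebra

noncomputable section

abbrev V6 := Fin 6 → ℂ

/-- standard basis vectors of ℂ⁶ -/
def e (i : Fin 6) : V6 := Pi.single i 1

/-- image of basis vectors in the exterior algebra -/
def ev (i : Fin 6) : ExteriorAlgebra ℂ V6 := ExteriorAlgebra.ι ℂ (e i)

/-- the volume element e₀∧e₁∧e₂∧e₃∧e₄∧e₅ -/
def vol : ExteriorAlgebra ℂ V6 := ev 0 * ev 1 * ev 2 * ev 3 * ev 4 * ev 5

/-!
Sorting the factors of the products `ω i * ω j` writes `∑ q i j • (ω i * ω j)` in the standard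
basis of `⋀ ℂ⁶`. Only nine basis 4-vectors occur, in three triples: for the pairs
`(x, y) = (q 0 1, q 2 2), (q 0 2, q 1 1), (q 1 2, q 0 0)` of a symmetric `q`, the coefficients
of the corresponding triple are, up to sign, the entries of `2 • (x • u - y • v)` with
`u = (a², b², c²)` and `v = (bc, ac, ab)`. So the sum vanishes iff `x • u = y • v` for all three
pairs, and such a relation has a solution `(x, y) ≠ 0` exactly when `u` and `v` are proportional.
-/

open Module

lemma exists_eq_smul_or_eq_smul_iff {K V : Type*} [Field K] [AddCommGroup V] [Module K V]
    (u v : V) :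
    (∃ t : K, u = t • v ∨ v = t • u) ↔ ∃ x y : K, (x ≠ 0 ∨ y ≠ 0) ∧ x • u = y • v := by
  constructor
  · rintro ⟨t, rfl | rfl⟩
    · exact ⟨1, t, Or.inl one_ne_zero, by rw [one_smul]⟩
    · exact ⟨t, 1, Or.inr one_ne_zero, by rw [one_smul]⟩
  · rintro ⟨x, y, hxy, h⟩
    by_cases hx : x = 0
    · refine ⟨0, Or.inr ?_⟩
      rw [hx, zero_smul, eq_comm, smul_eq_zero] at h
      rw [h.resolve_left (hxy.resolve_left (not_not.2 hx)), zero_smul]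
    · exact ⟨y / x, Or.inl (by rw [div_eq_inv_mul, mul_smul, ← h, inv_smul_smul₀ hx])⟩

lemma ιMulti_comp_basis_of_strictMono {R M I : Type*} [CommRing R] [AddCommGroup M] [Module R M]
    [LinearOrder I] (b : Basis I R M) {n : ℕ} {f : Fin n → I} (hf : StrictMono f) :
    ιMulti R n (b ∘ f) = b.ExteriorAlgebra (Finset.univ.image f) := by
  have hcard : (Finset.univ.image f).card = n := by
    rw [Finset.card_image_of_injective _ hf.injective, Finset.card_univ, Fintype.card_fin]
  rw [basis_apply_ofCard b hcard, ExteriorAlgebra.ιMulti_family,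
    Set.powersetCard.ofFinEmbEquiv_symm_apply]
  congr 2
  exact Finset.orderEmbOfFin_unique _ (by simp) hf

abbrev extBasis : Basis (Finset (Fin 6)) ℂ (ExteriorAlgebra ℂ V6) :=
  (Pi.basisFun ℂ (Fin 6)).ExteriorAlgebra

lemma ev_mul_ev_mul_ev_mul_ev {i j k l : Fin 6} (hij : i < j) (hjk : j < k) (hkl : k < l) :
    ev i * ev j * ev k * ev l = extBasis {i, j, k, l} := by
  have hf : StrictMono ![i, j, k, l] := by
    simp [Fin.strictMono_iff_lt_succ, Fin.forall_fin_succ, hij, hjk, hkl]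
  convert ιMulti_comp_basis_of_strictMono (Pi.basisFun ℂ (Fin 6)) hf using 1
  · simp [ιMulti_apply, ev, e, mul_assoc, Matrix.vecTail]
  · congr 1
    ext x
    simp [Fin.exists_fin_succ, eq_comm]

lemma ev_mul_self (i : Fin 6) : ev i * ev i = 0 := ι_sq_zero _

lemma mul_ev_mul_self (x : ExteriorAlgebra ℂ V6) (i : Fin 6) : x * ev i * ev i = 0 := by
  rw [mul_assoc, ev_mul_self, mul_zero]

lemma ev_mul_ev_anticomm (i j : Fin 6) : ev i * ev j = -(ev j * ev i) :=
  eq_neg_of_add_eq_zero_left (ι_add_mul_swap _ _)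

/- The guard `j < i` in the next two lemmas makes them terminating `simp` lemmas that sort
products of generators into increasing order. -/

lemma ev_mul_ev_of_lt {i j : Fin 6} (_h : j < i) : ev i * ev j = -(ev j * ev i) :=
  ev_mul_ev_anticomm i j

lemma mul_ev_mul_ev_of_lt (x : ExteriorAlgebra ℂ V6) {i j : Fin 6} (_h : j < i) :
    x * ev i * ev j = -(x * ev j * ev i) := by
  rw [mul_assoc, ev_mul_ev_anticomm i j, mul_neg, ← mul_assoc]

def wedgeSupport : Fin 9 → Finset (Fin 6) :=
  ![{0, 1, 2, 3}, {1, 2, 4, 5}, {0, 3, 4, 5},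
    {0, 1, 4, 5}, {0, 2, 3, 5}, {1, 2, 3, 4},
    {2, 3, 4, 5}, {0, 1, 3, 4}, {0, 1, 2, 5}]

lemma linearIndependent_extBasis_wedgeSupport :
    LinearIndependent ℂ (fun k => extBasis (wedgeSupport k)) :=
  extBasis.linearIndependent.comp _ (by decide)

def omegaFamily (a b c : ℂ) : Fin 3 → ExteriorAlgebra ℂ V6 :=
  ![a • (ev 0 * ev 1) + b • (ev 2 * ev 5) + c • (ev 4 * ev 3),
    a • (ev 2 * ev 3) + b • (ev 4 * ev 1) + c • (ev 0 * ev 5),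
    a • (ev 4 * ev 5) + b • (ev 0 * ev 3) + c • (ev 2 * ev 1)]

lemma sum_smul_omegaFamily_mul_omegaFamily (a b c : ℂ) (q : Fin 3 → Fin 3 → ℂ) :
    ∑ i, ∑ j, q i j • (omegaFamily a b c i * omegaFamily a b c j) = ∑ k, ![
      (q 0 1 + q 1 0) * a ^ 2 - 2 * q 2 2 * (b * c),
      (q 0 1 + q 1 0) * b ^ 2 - 2 * q 2 2 * (a * c),
      2 * q 2 2 * (a * b) - (q 0 1 + q 1 0) * c ^ 2,
      (q 0 2 + q 2 0) * a ^ 2 - 2 * q 1 1 * (b * c),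
      2 * q 1 1 * (a * c) - (q 0 2 + q 2 0) * b ^ 2,
      (q 0 2 + q 2 0) * c ^ 2 - 2 * q 1 1 * (a * b),
      (q 1 2 + q 2 1) * a ^ 2 - 2 * q 0 0 * (b * c),
      (q 1 2 + q 2 1) * b ^ 2 - 2 * q 0 0 * (a * c),
      2 * q 0 0 * (a * b) - (q 1 2 + q 2 1) * c ^ 2] k • extBasis (wedgeSupport k) := by
  simp only [Fin.sum_univ_three, omegaFamily, Matrix.cons_val, mul_add, add_mul, smul_mul_smul,
    ← mul_assoc]
  simp only [ev_mul_ev_of_lt, mul_ev_mul_ev_of_lt, ev_mul_self, mul_ev_mul_self, neg_mul,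
    neg_neg, zero_mul, smul_zero, smul_neg, neg_zero, add_zero, zero_add, Fin.reduceLT]
  simp only [ev_mul_ev_mul_ev_mul_ev, Fin.reduceLT]
  simp only [Fin.sum_univ_succ, Fin.sum_univ_zero, wedgeSupport, Matrix.cons_val_zero,
    Matrix.cons_val_succ, smul_add, smul_neg, add_zero]
  module

lemma sum_smul_omegaFamily_mul_omegaFamily_eq_zero_iff (a b c : ℂ) (q : Fin 3 → Fin 3 → ℂ)
    (hq : ∀ i j, q i j = q j i) :
    ∑ i, ∑ j, q i j • (omegaFamily a b c i * omegaFamily a b c j) = 0 ↔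
      q 0 1 • ![a ^ 2, b ^ 2, c ^ 2] = q 2 2 • ![b * c, a * c, a * b] ∧
      q 0 2 • ![a ^ 2, b ^ 2, c ^ 2] = q 1 1 • ![b * c, a * c, a * b] ∧
      q 1 2 • ![a ^ 2, b ^ 2, c ^ 2] = q 0 0 • ![b * c, a * c, a * b] := by
  have hzero : ∀ g : Fin 9 → ℂ, ∑ k, g k • extBasis (wedgeSupport k) = 0 ↔ ∀ k, g k = 0 :=
    fun g => ⟨Fintype.linearIndependent_iff.1 linearIndependent_extBasis_wedgeSupport g,
      fun h => by simp [h]⟩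
  have hcoeff : ∀ x y A B : ℂ, (x + x) * A - 2 * y * B = 0 ↔ x * A = y * B := fun x y A B =>
    ⟨fun h => by linear_combination h / 2, fun h => by linear_combination 2 * h⟩
  have hcoeff' : ∀ x y A B : ℂ, 2 * y * B - (x + x) * A = 0 ↔ x * A = y * B := fun x y A B =>
    ⟨fun h => by linear_combination -h / 2, fun h => by linear_combination -2 * h⟩
  rw [sum_smul_omegaFamily_mul_omegaFamily, hzero, hq 1 0, hq 2 0, hq 2 1]
  simp [Fin.forall_fin_succ, funext_iff, hcoeff, hcoeff', and_assoc]

theorem semisimple_injectivity_general (a b c : ℂ)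
    (ω : Fin 3 → ExteriorAlgebra ℂ V6)
    (h₁ : ω 0 = a • (ev 0 * ev 1) + b • (ev 2 * ev 5) + c • (ev 4 * ev 3))
    (h₂ : ω 1 = a • (ev 2 * ev 3) + b • (ev 4 * ev 1) + c • (ev 0 * ev 5))
    (h₃ : ω 2 = a • (ev 4 * ev 5) + b • (ev 0 * ev 3) + c • (ev 2 * ev 1)) :
    (∀ q : Fin 3 → Fin 3 → ℂ, (∀ i j, q i j = q j i) →
        (∑ i, ∑ j, q i j • (ω i * ω j)) = 0 → q = 0) ↔
    ¬ (∃ t : ℂ, (![a^2, b^2, c^2] = t • ![b*c, a*c, a*b]) ∨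
                (![b*c, a*c, a*b] = t • ![a^2, b^2, c^2])) := by
  obtain rfl : ω = omegaFamily a b c := by
    funext i
    fin_cases i <;> assumption
  rw [exists_eq_smul_or_eq_smul_iff]
  constructor
  · rintro hinj ⟨x, y, hxy, hrel⟩
    set q : Fin 3 → Fin 3 → ℂ := fun i j => if i = j then y else x
    have hq : ∀ i j, q i j = q j i := fun i j => by simp only [q, eq_comm]
    have hsum := (sum_smul_omegaFamily_mul_omegaFamily_eq_zero_iff a b c q hq).2
      (by simp only [q, Fin.reduceEq, ↓reduceIte]; exact ⟨hrel, hrel, hrel⟩)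
    have hx := congrFun (congrFun (hinj q hq hsum) 0) 1
    have hy := congrFun (congrFun (hinj q hq hsum) 0) 0
    simp only [q, Fin.reduceEq, ↓reduceIte, Pi.zero_apply] at hx hy
    exact hxy.elim (· hx) (· hy)
  · intro hnp q hq hsum
    have hpair : ∀ x y : ℂ, x • ![a^2, b^2, c^2] = y • ![b*c, a*c, a*b] → x = 0 ∧ y = 0 :=
      fun x y h => by by_contra hne; exact hnp ⟨x, y, by tauto, h⟩
    obtain ⟨h01, h02, h12⟩ := (sum_smul_omegaFamily_mul_omegaFamily_eq_zero_iff a b c q hq).1 hsum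
    obtain ⟨h01, h22⟩ := hpair _ _ h01
    obtain ⟨h02, h11⟩ := hpair _ _ h02
    obtain ⟨h12, h00⟩ := hpair _ _ h12
    ext i j
    fin_cases i <;> fin_cases j <;> simp [h00, h11, h22, h01, h02, h12, hq 1 0, hq 2 0, hq 2 1]

/-- For ω₁ = a·e₁∧e₂ + b·e₃∧e₆ + c·e₅∧e₄, ω₂ = a·e₃∧e₄ + b·e₅∧e₂ + c·e₁∧e₆,
ω₃ = a·e₅∧e₆ + b·e₁∧e₄ + c·e₃∧e₂ (indices shifted to 0–5), assumed linearly
independent, the wedge map Sym²⟨ω₁,ω₂,ω₃⟩ → ⋀⁴V₆ is injective if and only if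
(a²,b²,c²) and (bc,ac,ab) are not proportional. -/
theorem semisimple_injectivity (a b c : ℂ)
    (ω : Fin 3 → ExteriorAlgebra ℂ V6)
    (h₁ : ω 0 = a • (ev 0 * ev 1) + b • (ev 2 * ev 5) + c • (ev 4 * ev 3))
    (h₂ : ω 1 = a • (ev 2 * ev 3) + b • (ev 4 * ev 1) + c • (ev 0 * ev 5))
    (h₃ : ω 2 = a • (ev 4 * ev 5) + b • (ev 0 * ev 3) + c • (ev 2 * ev 1))
    (hind : LinearIndependent ℂ ω) :
    (∀ q : Fin 3 → Fin 3 → ℂ, (∀ i j, q i j = q j i) →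
        (∑ i, ∑ j, q i j • (ω i * ω j)) = 0 → q = 0) ↔
    ¬ (∃ t : ℂ, (![a^2, b^2, c^2] = t • ![b*c, a*c, a*b]) ∨
                (![b*c, a*c, a*b] = t • ![a^2, b^2, c^2])) :=
  semisimple_injectivity_general a b c ω h₁ h₂ h₃
end
end

section
/- Let H ⊆ ⋀²V₆ be 4-dimensional, ω₀ ∈ H with ω₀∧ω₀∧ω₀ = 0 and ω₀∧ω₀ ≠ 0 (rank 4), and suppose ω₀∧ω₀∧ω = 0 for all ω ∈ H. Let V₄ ⊆ V₆ be the unique 4-dimensional subspace with ω₀ ∈ ⋀²V₄. Then H ⊆ V₄∧V₆ (the subspace of ⋀²V₆ spanned by wedges v∧w with v ∈ V₄, w ∈ V₆). -/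
open ExteriorAlgebra Module Submodule

/-!
Since ω₀ ∈ ⋀²V₄, the square ω₀∧ω₀ lies in the line ⋀⁴V₄, so it is c·e₁∧e₂∧e₃∧e₄ with c ≠ 0
for a basis (eᵢ) of V₄, and it kills V₄∧V₆ because ⋀⁵V₄ = 0. Completing the eᵢ by x, y to a
basis of V₆, every ω ∈ ⋀²V₆ is s + t·x∧y with s ∈ V₄∧V₆, hence
ω₀∧ω₀∧ω = t·c·e₁∧e₂∧e₃∧e₄∧x∧y, which vanishes only for t = 0.
-/

theorem Fin.range_append {α : Type*} {m n : ℕ} (u : Fin m → α) (w : Fin n → α) :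
    Set.range (Fin.append u w) = Set.range u ∪ Set.range w := by
  ext z
  constructor
  · rintro ⟨i, rfl⟩
    induction i using Fin.addCases <;> simp
  · rintro (⟨i, rfl⟩ | ⟨i, rfl⟩)
    exacts [⟨_, Fin.append_left u w i⟩, ⟨_, Fin.append_right u w i⟩]

theorem Submodule.exists_sup_span_pair_eq_top {K V : Type*} [Field K] [AddCommGroup V]
    [Module K V] [FiniteDimensional K V] (P : Submodule K V)
    (h : finrank K P + 2 = finrank K V) : ∃ x y : V, P ⊔ span K {x, y} = ⊤ := by
  obtain ⟨W, hW⟩ := P.exists_isCompl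
  have hW2 : finrank K W = 2 := by
    have := Submodule.finrank_add_eq_of_isCompl hW
    omega
  let b := finBasisOfFinrankEq K W hW2
  refine ⟨b 0, b 1, ?_⟩
  have hrange : {(b 0 : V), (b 1 : V)} = W.subtype '' Set.range b := by
    ext
    simp [Fin.exists_fin_two, eq_comm]
  rw [hrange, ← map_span, b.span_eq, Submodule.map_top, Submodule.range_subtype, hW.sup_eq_top]

namespace ExteriorAlgebra

section CommRing

variable {R V : Type*} [CommRing R] [AddCommGroup V] [Module R V]

theorem ι_mul_ι_eq_neg (a b : V) : ι R a * ι R b = -(ι R b * ι R a) :=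
  eq_neg_of_add_eq_zero_left (ι_add_mul_swap a b)

theorem ιMulti_basis_ne_zero [Nontrivial R] {n : ℕ} (b : Basis (Fin n) R V) :
    ιMulti R n b ≠ 0 := by
  intro h
  -- `b.det`, extended by zero to the other degrees, factors through `ιMulti` and is `1` at `b`.
  have := congrArg (liftAlternating (Function.update 0 n b.det)) h
  simp [liftAlternating_apply_ιMulti, Basis.det_self] at this

theorem span_ι_mul_ι_eq_mul (P Q : Submodule R V) :
    span R {x | ∃ u ∈ P, ∃ w ∈ Q, x = ι R u * ι R w} = P.map (ι R) * Q.map (ι R) := by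
  rw [← P.span_eq, ← Q.span_eq, map_span, map_span, span_mul_span, P.span_eq, Q.span_eq]
  congr 1
  ext x
  simp [Set.mem_mul, eq_comm]

theorem span_ι_mul_ι_eq_mul_range (P : Submodule R V) :
    span R {x | ∃ u ∈ P, ∃ w : V, x = ι R u * ι R w} = P.map (ι R) * LinearMap.range (ι R) := by
  simpa using span_ι_mul_ι_eq_mul P ⊤

theorem span_ι_mul_ι_eq_exteriorPower_two :
    span R {x | ∃ a b : V, x = ι R a * ι R b} = ⋀[R]^2 V := by
  simpa [exteriorPower, sq] using span_ι_mul_ι_eq_mul (⊤ : Submodule R V) ⊤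

theorem map_ι_pow_eq_map_exteriorPower (P : Submodule R V) (n : ℕ) :
    P.map (ι R) ^ n = (⋀[R]^n P).map (map P.subtype).toLinearMap := by
  rw [exteriorPower, Submodule.map_pow, LinearMap.range_eq_map, ← Submodule.map_comp,
    map_comp_ι, Submodule.map_comp, map_subtype_top]

theorem exteriorPower_two_le_of_sup_span_pair_eq_top (P : Submodule R V) {x y : V}
    (h : P ⊔ span R {x, y} = ⊤) :
    ⋀[R]^2 V ≤ P.map (ι R) * LinearMap.range (ι R) ⊔ R ∙ (ι R x * ι R y) := by
  set M := P.map (ι R) * LinearMap.range (ι R) ⊔ R ∙ (ι R x * ι R y)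
  have hgen : span R (ι R '' (P ∪ {x, y})) = LinearMap.range (ι R) := by
    rw [← map_span, span_union, span_eq, h, Submodule.map_top]
  have hP : ∀ {a b : V}, a ∈ P → ι R a * ι R b ∈ M := fun ha =>
    mem_sup_left (mul_mem_mul (mem_map_of_mem ha) (LinearMap.mem_range_self _ _))
  have hswap : ∀ {a b : V}, ι R b * ι R a ∈ M → ι R a * ι R b ∈ M := fun hba => by
    rw [ι_mul_ι_eq_neg]
    exact neg_mem hba
  have hxy : ι R x * ι R y ∈ M := mem_sup_right (mem_span_singleton_self _)
  have hpair : ∀ a ∈ ({x, y} : Set V), ∀ b ∈ ({x, y} : Set V), ι R a * ι R b ∈ M := by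
    simp only [Set.mem_insert_iff, Set.mem_singleton_iff, forall_eq_or_imp, forall_eq, ι_sq_zero,
      zero_mem, hxy, hswap hxy, and_self]
  rw [exteriorPower, sq, ← hgen, span_mul_span, span_le]
  rintro _ ⟨_, ⟨a, ha, rfl⟩, _, ⟨b, hb, rfl⟩, rfl⟩
  rcases ha with ha | ha
  · exact hP ha
  rcases hb with hb | hb
  · exact hswap (hP hb)
  · exact hpair a ha b hb

end CommRing

section Field

variable {K V : Type*} [Field K] [AddCommGroup V] [Module K V]

theorem ιMulti_ne_zero_of_span_eq_top [FiniteDimensional K V] {n : ℕ} {v : Fin n → V}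
    (hv : span K (Set.range v) = ⊤) (hn : n = finrank K V) : ιMulti K n v ≠ 0 := by
  rw [← coe_basisOfTopLeSpanOfCardEqFinrank v hv.ge (by simpa)]
  exact ιMulti_basis_ne_zero _

theorem ιMulti_mul_ι_mul_ι_ne_zero [FiniteDimensional K V] {P : Submodule K V} {n : ℕ}
    (b : Basis (Fin n) K P) {x y : V} (h : P ⊔ span K {x, y} = ⊤) (hn : n + 2 = finrank K V) :
    ιMulti K n (P.subtype ∘ b) * (ι K x * ι K y) ≠ 0 := by
  have hspan : span K (Set.range (Fin.append (P.subtype ∘ b) ![x, y])) = ⊤ := by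
    rw [Fin.range_append, span_union, Set.range_comp, ← map_span, b.span_eq, Submodule.map_top,
      Submodule.range_subtype, Matrix.range_cons, Matrix.range_cons_empty, Set.singleton_union, h]
  rw [show ι K x * ι K y = ιMulti K 2 ![x, y] by simp [ιMulti_apply], ιMulti_mul_ιMulti]
  exact ιMulti_ne_zero_of_span_eq_top hspan hn

theorem map_ι_pow_eq_bot (P : Submodule K V) [FiniteDimensional K P] {n : ℕ}
    (hn : finrank K P < n) : P.map (ι K) ^ n = ⊥ := by
  have : ⋀[K]^n P = ⊥ := Submodule.finrank_eq_zero.1 <| by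
    rw [exteriorPower.finrank_eq, Nat.choose_eq_zero_of_lt hn]
  rw [map_ι_pow_eq_map_exteriorPower, this, Submodule.map_bot]

theorem map_ι_pow_le_span_ιMulti (P : Submodule K V) {n : ℕ} (b : Basis (Fin n) K P) :
    P.map (ι K) ^ n ≤ K ∙ ιMulti K n (P.subtype ∘ b) := by
  have : FiniteDimensional K P := b.finiteDimensional_of_finite
  have hrank : finrank K (⋀[K]^n P) = 1 := by
    rw [exteriorPower.finrank_eq, finrank_eq_card_basis b, Fintype.card_fin, Nat.choose_self]
  rw [map_ι_pow_eq_map_exteriorPower, eq_span_singleton_of_mem_of_finrank_eq_one hrank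
    (ιMulti_range K n ⟨b, rfl⟩) (ιMulti_basis_ne_zero b)]
  simp [Submodule.map_span]

end Field

end ExteriorAlgebra

theorem cone_support_general (V : Type*) [AddCommGroup V] [Module ℂ V]
    [FiniteDimensional ℂ V] (h6 : Module.finrank ℂ V = 6)
    (H : Submodule ℂ (ExteriorAlgebra ℂ V))
    (hHdeg : H ≤ Submodule.span ℂ
      {x : ExteriorAlgebra ℂ V | ∃ a b : V, x = ExteriorAlgebra.ι ℂ a * ExteriorAlgebra.ι ℂ b})
    (ω₀ : ExteriorAlgebra ℂ V)
    (V4 : Submodule ℂ V) (h4 : Module.finrank ℂ V4 = 4)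
    (hsupp : ω₀ ∈ Submodule.span ℂ
      {x : ExteriorAlgebra ℂ V | ∃ u ∈ V4, ∃ w ∈ V4,
        x = ExteriorAlgebra.ι ℂ u * ExteriorAlgebra.ι ℂ w})
    (hr4 : ω₀ * ω₀ ≠ 0)
    (hann : ∀ ω ∈ H, ω₀ * ω₀ * ω = 0) :
    H ≤ Submodule.span ℂ
      {x : ExteriorAlgebra ℂ V | ∃ u ∈ V4, ∃ w : V,
        x = ExteriorAlgebra.ι ℂ u * ExteriorAlgebra.ι ℂ w} := by
  rw [span_ι_mul_ι_eq_exteriorPower_two] at hHdeg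
  rw [span_ι_mul_ι_eq_mul] at hsupp
  rw [span_ι_mul_ι_eq_mul_range]
  obtain ⟨x, y, hxy⟩ := V4.exists_sup_span_pair_eq_top (by omega)
  let b4 := finBasisOfFinrankEq ℂ V4 h4
  have hsq : ω₀ * ω₀ ∈ V4.map (ι ℂ) ^ 4 := by
    simpa [pow_succ, mul_assoc] using mul_mem_mul hsupp hsupp
  obtain ⟨c, hc⟩ := mem_span_singleton.1 (map_ι_pow_le_span_ιMulti V4 b4 hsq)
  have hc0 : c ≠ 0 := by
    rintro rfl
    exact hr4 (by simp [← hc])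
  have hkill : ∀ s ∈ V4.map (ι ℂ) * LinearMap.range (ι ℂ), ω₀ * ω₀ * s = 0 := fun s hs => by
    have := mul_mem_mul hsq hs
    rwa [← mul_assoc, ← pow_succ, map_ι_pow_eq_bot V4 (by omega), bot_mul, mem_bot] at this
  have hxy0 : ω₀ * ω₀ * (ι ℂ x * ι ℂ y) ≠ 0 := by
    rw [← hc, smul_mul_assoc]
    exact smul_ne_zero hc0 (ιMulti_mul_ι_mul_ι_ne_zero b4 hxy (by omega))
  intro ω hω
  obtain ⟨s, hs, _, hF, rfl⟩ :=
    mem_sup.1 (exteriorPower_two_le_of_sup_span_pair_eq_top V4 hxy (hHdeg hω))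
  obtain ⟨t, rfl⟩ := mem_span_singleton.1 hF
  have ht : t = 0 := by
    have := hann _ hω
    rw [mul_add, hkill s hs, zero_add, mul_smul_comm] at this
    exact (smul_eq_zero.1 this).resolve_right hxy0
  simpa [ht] using hs

/-- Let H ⊆ ⋀²V₆ be 4-dimensional and ω₀ ∈ H of rank 4 (ω₀∧ω₀ ≠ 0, ω₀∧ω₀∧ω₀ = 0),
with support the 4-dimensional subspace V₄ (so ω₀ ∈ ⋀²V₄). If ω₀∧ω₀∧ω = 0 for every
ω ∈ H then H ⊆ V₄∧V₆. -/
theorem cone_support (V : Type*) [AddCommGroup V] [Module ℂ V]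
    [FiniteDimensional ℂ V] (h6 : Module.finrank ℂ V = 6)
    (H : Submodule ℂ (ExteriorAlgebra ℂ V)) (h4H : Module.finrank ℂ H = 4)
    (hHdeg : H ≤ Submodule.span ℂ
      {x : ExteriorAlgebra ℂ V | ∃ a b : V, x = ExteriorAlgebra.ι ℂ a * ExteriorAlgebra.ι ℂ b})
    (ω₀ : ExteriorAlgebra ℂ V) (hω₀H : ω₀ ∈ H)
    (V4 : Submodule ℂ V) (h4 : Module.finrank ℂ V4 = 4)
    (hsupp : ω₀ ∈ Submodule.span ℂ
      {x : ExteriorAlgebra ℂ V | ∃ u ∈ V4, ∃ w ∈ V4,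
        x = ExteriorAlgebra.ι ℂ u * ExteriorAlgebra.ι ℂ w})
    (hr4 : ω₀ * ω₀ ≠ 0) (hr4' : ω₀ * ω₀ * ω₀ = 0)
    (hann : ∀ ω ∈ H, ω₀ * ω₀ * ω = 0) :
    H ≤ Submodule.span ℂ
      {x : ExteriorAlgebra ℂ V | ∃ u ∈ V4, ∃ w : V,
        x = ExteriorAlgebra.ι ℂ u * ExteriorAlgebra.ι ℂ w} :=
  cone_support_general V h6 H hHdeg ω₀ V4 h4 hsupp hr4 hann
end
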